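/- Let $\Psi_1, \ldots, \Psi_N$ and $\Psi^\Delta_1, \ldots, \Psi^\Delta_{N_c}$ (with $N = mN_c$) be $n \times n$ matrices, and define $\mathcal{B}_{\Psi,s}^l = \Psi_s\Psi_{s-1}\cdots\Psi_{s-l+1}$ with $\mathcal{B}_{\Psi,s}^0 = I$. Suppose the two-level MGRIT iteration (FCF-relaxation on the system $\mathcal{A}\mathcal{U} = \mathcal{G}$, restriction by injection at C-points $\{km\}$, exact coarse solve with coarse propagators $\Psi^\Delta_k$, and C-point correction) is applied with error $\mathcal{E}$ at the C-points before the iteration. Then the new C-point error satisfies $\tilde{\mathcal{E}}_0 = \tilde{\mathcal{E}}_m = 0$ and $\tilde{\mathcal{E}}_{km} = \sum_{i=0}^{k-2} \mathcal{B}_{\Psi^\Delta, k}^{k-2-i} \, (\mathcal{B}_{\Psi,(i+2)m}^m - \Psi^\Delta_{i+2}) \, \mathcal{B}_{\Psi,(i+1)m}^m \, \mathcal{E}_{im}$ for $k = 2, \ldots, N_c$. -/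
import Mathlib


/-- `Bprod Ψ s l = Ψ_s Ψ_{s-1} ⋯ Ψ_{s-l+1}` (with `Bprod Ψ s 0 = 1`). -/
def Bprod {n : ℕ} (Ψ : ℕ → Matrix (Fin n) (Fin n) ℝ) (s l : ℕ) :
    Matrix (Fin n) (Fin n) ℝ :=
  ((List.range l).map (fun t => Ψ (s - t))).prod

lemma Bprod_zero {n : ℕ} (Ψ : ℕ → Matrix (Fin n) (Fin n) ℝ) (s : ℕ) :
    Bprod Ψ s 0 = 1 := rfl

lemma Bprod_succ_left {n : ℕ} (Ψ : ℕ → Matrix (Fin n) (Fin n) ℝ) (s l : ℕ) :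
    Bprod Ψ s (l + 1) = Ψ s * Bprod Ψ (s - 1) l := by
  unfold Bprod
  rw [List.range_succ_eq_map, List.map_cons, List.map_map, List.prod_cons]
  simp only [Nat.sub_zero]
  have h : ((fun t => Ψ (s - t)) ∘ Nat.succ) = (fun t => Ψ (s - 1 - t)) := by
    funext t
    simp [Function.comp, Nat.sub_sub, Nat.add_comm]
  rw [h]

lemma mulVec_sum {n : ℕ} (A : Matrix (Fin n) (Fin n) ℝ) {ι : Type*} (s : Finset ι)
    (f : ι → Fin n → ℝ) :
    A.mulVec (∑ i ∈ s, f i) = ∑ i ∈ s, A.mulVec (f i) := by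
  exact map_sum A.mulVecLin f s

/-- generic F-relaxation error propagation -/
lemma frelax {n N m : ℕ} (Ψ : ℕ → Matrix (Fin n) (Fin n) ℝ)
    (G U W : ℕ → Fin n → ℝ)
    (hU : ∀ j, 1 ≤ j → j ≤ N → U j = (Ψ j).mulVec (U (j - 1)) + G j)
    (hW : ∀ j, 1 ≤ j → j ≤ N → ¬ m ∣ j → W j = (Ψ j).mulVec (W (j - 1)) + G j)
    (b : ℕ) (hb : m ∣ b) (t : ℕ) (ht : t < m) (hbt : b + t ≤ N) :
    U (b + t) - W (b + t) = (Bprod Ψ (b + t) t).mulVec (U b - W b) := by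
  induction t with
  | zero => simp [Bprod_zero, Matrix.one_mulVec]
  | succ t ih =>
    have ht' : t < m := Nat.lt_of_succ_lt ht
    have hbt' : b + t ≤ N := by omega
    have h1 : 1 ≤ b + (t + 1) := by omega
    have hnd : ¬ m ∣ (b + (t + 1)) := by
      intro hd
      have : m ∣ (t + 1) := (Nat.dvd_add_right hb).mp (by convert hd using 1)
      have := Nat.le_of_dvd (by omega) this
      omega
    have hUe := hU (b + (t + 1)) h1 (by omega)
    have hWe := hW (b + (t + 1)) h1 (by omega) hnd
    have hsub : b + (t + 1) - 1 = b + t := by omega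
    rw [hsub] at hUe hWe
    rw [hUe, hWe]
    have : (Ψ (b + (t+1))).mulVec (U (b + t)) + G (b + (t+1))
        - ((Ψ (b + (t+1))).mulVec (W (b + t)) + G (b + (t+1)))
        = (Ψ (b + (t+1))).mulVec (U (b + t) - W (b + t)) := by
      rw [Matrix.mulVec_sub]; abel
    rw [this, ih ht' hbt', Matrix.mulVec_mulVec, Bprod_succ_left]
    rfl

open Matrix in
/-- Lemma 3.1 (two-level MGRIT error propagation with time-dependent
propagators).  `U` is the exact solution of the one-step recursion,
`V` an initial approximation with error `E = U − V`.  One two-level cycle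
(F-relaxation `X`, C-relaxation `Y`, second F-relaxation `Z`, residual
injection `G2` at the C-points `{km}`, exact coarse solve `U2` with coarse
propagators `Ψc`, and C-point correction) produces the new C-point errors
`Et k = U (km) − (Y (km) + U2 k)`, which satisfy `Et 0 = Et 1 = 0` and the
stated sum formula for `2 ≤ k ≤ Nc`. -/
theorem stmt_9 {n N m Nc : ℕ} (hm : 2 ≤ m) (hNc : 2 ≤ Nc) (hN : N = m * Nc)
    (Ψ Ψc : ℕ → Matrix (Fin n) (Fin n) ℝ)
    (G U V X Y Z G2 U2 E Et : ℕ → Fin n → ℝ)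
    -- exact solution of the time-stepping system
    (hU0 : U 0 = G 0)
    (hU : ∀ j, 1 ≤ j → j ≤ N → U j = (Ψ j).mulVec (U (j - 1)) + G j)
    -- initial error
    (hE : ∀ j, j ≤ N → E j = U j - V j)
    -- initial F-relaxation
    (hXC : ∀ j, j ≤ N → m ∣ j → X j = V j)
    (hXF : ∀ j, 1 ≤ j → j ≤ N → ¬ m ∣ j → X j = (Ψ j).mulVec (X (j - 1)) + G j)
    -- C-relaxation
    (hY0 : Y 0 = G 0)
    (hYC : ∀ k, 1 ≤ k → k ≤ Nc →
      Y (k * m) = (Ψ (k * m)).mulVec (X (k * m - 1)) + G (k * m))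
    -- second F-relaxation
    (hZC : ∀ j, j ≤ N → m ∣ j → Z j = Y j)
    (hZF : ∀ j, 1 ≤ j → j ≤ N → ¬ m ∣ j → Z j = (Ψ j).mulVec (Z (j - 1)) + G j)
    -- residual injected at the C-points
    (hG20 : G2 0 = 0)
    (hG2 : ∀ k, 1 ≤ k → k ≤ Nc →
      G2 k = G (k * m) + (Ψ (k * m)).mulVec (Z (k * m - 1)) - Y (k * m))
    -- exact coarse-grid solve
    (hU20 : U2 0 = 0)
    (hU2 : ∀ k, 1 ≤ k → k ≤ Nc → U2 k = (Ψc k).mulVec (U2 (k - 1)) + G2 k)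
    -- new C-point error after the C-point correction
    (hEt : ∀ k, k ≤ Nc → Et k = U (k * m) - (Y (k * m) + U2 k)) :
    Et 0 = 0 ∧ Et 1 = 0 ∧
      ∀ k, 2 ≤ k → k ≤ Nc →
        Et k = ∑ i ∈ Finset.range (k - 1),
          (Bprod Ψc k (k - 2 - i) *
            (Bprod Ψ ((i + 2) * m) m - Ψc (i + 2)) *
            Bprod Ψ ((i + 1) * m) m).mulVec (E (i * m)) := by
  have hmpos : 0 < m := by omega
  -- simple index bounds
  have hkmN : ∀ k, k ≤ Nc → k * m ≤ N := by
    intro k hk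
    rw [hN]
    calc k * m ≤ Nc * m := Nat.mul_le_mul_right m hk
      _ = m * Nc := mul_comm _ _
  -- error after the first F-relaxation, at the point before the next C-point
  have heX : ∀ k, 1 ≤ k → k ≤ Nc →
      U (k * m - 1) - X (k * m - 1)
        = (Bprod Ψ (k * m - 1) (m - 1)).mulVec (E ((k - 1) * m)) := by
    intro k hk hkNc
    obtain ⟨k', rfl⟩ : ∃ k', k = k' + 1 := ⟨k - 1, by omega⟩
    have hmul : (k' + 1) * m = k' * m + m := by ring
    have hbN : k' * m + (m - 1) ≤ N := by
      have h1 : (k' + 1) * m ≤ N := hkmN _ hkNc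
      rw [hmul] at h1; omega
    have hfr := frelax (N := N) (m := m) Ψ G U X hU hXF (k' * m)
      ⟨k', mul_comm _ _⟩ (m - 1) (by omega) hbN
    have hidx : (k' + 1) * m - 1 = k' * m + (m - 1) := by rw [hmul]; omega
    have hXV : X (k' * m) = V (k' * m) := hXC _ (by
      have := hkmN k' (by omega); exact this) ⟨k', mul_comm _ _⟩
    have hEV : E (k' * m) = U (k' * m) - V (k' * m) :=
      hE _ (hkmN k' (by omega))
    rw [hidx, hfr, hXV, ← hEV]
    simp
  -- error after the C-relaxation
  have heY : ∀ k, 1 ≤ k → k ≤ Nc →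
      U (k * m) - Y (k * m) = (Bprod Ψ (k * m) m).mulVec (E ((k - 1) * m)) := by
    intro k hk hkNc
    have hpos : 1 ≤ k * m := Nat.one_le_iff_ne_zero.mpr (by positivity)
    have hUe := hU (k * m) hpos (hkmN _ hkNc)
    have hYe := hYC k hk hkNc
    rw [hUe, hYe]
    have hsplit : (Ψ (k * m)).mulVec (U (k * m - 1)) + G (k * m)
        - ((Ψ (k * m)).mulVec (X (k * m - 1)) + G (k * m))
        = (Ψ (k * m)).mulVec (U (k * m - 1) - X (k * m - 1)) := by
      rw [Matrix.mulVec_sub]; abel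
    rw [hsplit, heX k hk hkNc, Matrix.mulVec_mulVec]
    have hm1 : m = (m - 1) + 1 := by omega
    rw [hm1, Bprod_succ_left]
    simp [← hm1]
  -- one-step recursion for the new error
  have hrec : ∀ k, 1 ≤ k → k ≤ Nc →
      Et k = (Bprod Ψ (k * m) m - Ψc k).mulVec (U ((k - 1) * m) - Y ((k - 1) * m))
        + (Ψc k).mulVec (Et (k - 1)) := by
    intro k hk hkNc
    have hpos : 1 ≤ k * m := Nat.one_le_iff_ne_zero.mpr (by positivity)
    -- error after the second F-relaxation at k*m - 1
    have heZ : U (k * m - 1) - Z (k * m - 1)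
        = (Bprod Ψ (k * m - 1) (m - 1)).mulVec (U ((k - 1) * m) - Y ((k - 1) * m)) := by
      obtain ⟨k', rfl⟩ : ∃ k', k = k' + 1 := ⟨k - 1, by omega⟩
      have hmul : (k' + 1) * m = k' * m + m := by ring
      have hbN : k' * m + (m - 1) ≤ N := by
        have h1 : (k' + 1) * m ≤ N := hkmN _ hkNc
        rw [hmul] at h1; omega
      have hfr := frelax (N := N) (m := m) Ψ G U Z hU hZF (k' * m)
        ⟨k', mul_comm _ _⟩ (m - 1) (by omega) hbN
      have hidx : (k' + 1) * m - 1 = k' * m + (m - 1) := by rw [hmul]; omega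
      have hZY : Z (k' * m) = Y (k' * m) :=
        hZC _ (hkmN k' (by omega)) ⟨k', mul_comm _ _⟩
      rw [hidx, hfr, hZY]
      simp
    have key : (Ψ (k * m)).mulVec (U (k * m - 1)) - (Ψ (k * m)).mulVec (Z (k * m - 1))
        = (Bprod Ψ (k * m) m).mulVec (U ((k - 1) * m) - Y ((k - 1) * m)) := by
      rw [← Matrix.mulVec_sub, heZ, Matrix.mulVec_mulVec]
      have hm1 : m = (m - 1) + 1 := by omega
      rw [hm1, Bprod_succ_left]
      simp [← hm1]
    have hU2k1 : U2 (k - 1) = (U ((k - 1) * m) - Y ((k - 1) * m)) - Et (k - 1) := by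
      rw [hEt (k - 1) (by omega)]; abel
    rw [hEt k hkNc, hU2 k hk hkNc, hG2 k hk hkNc, hU (k * m) hpos (hkmN _ hkNc), hU2k1,
      Matrix.sub_mulVec, Matrix.mulVec_sub, ← key, Matrix.mulVec_sub]
    abel
  have hEt0 : Et 0 = 0 := by
    have := hEt 0 (by omega)
    simpa [hU0, hY0, hU20] using this
  have hEt1 : Et 1 = 0 := by
    have h := hrec 1 (by omega) (by omega)
    simpa [hU0, hY0, hEt0, Matrix.mulVec_zero] using h
  refine ⟨hEt0, hEt1, ?_⟩
  intro k hk
  induction k, hk using Nat.le_induction with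
  | base =>
    intro h2Nc
    have h := hrec 2 (by omega) h2Nc
    rw [hEt1, Matrix.mulVec_zero, add_zero] at h
    rw [h, heY 1 (by omega) (by omega)]
    simp [Bprod_zero, Matrix.mulVec_mulVec, Matrix.mul_assoc]
  | succ k hk2 ih =>
    intro hk1Nc
    obtain ⟨j, rfl⟩ : ∃ j, k = j + 2 := ⟨k - 2, by omega⟩
    have h := hrec (j + 2 + 1) (by omega) hk1Nc
    have hidx : j + 2 + 1 - 1 = j + 2 := by omega
    rw [hidx] at h
    rw [h, heY (j + 2) (by omega) (by omega), ih (by omega)]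
    have hidx2 : j + 2 - 1 = j + 1 := by omega
    have hidx3 : j + 2 + 1 - 1 = j + 2 := by omega
    rw [hidx2]
    conv_rhs => rw [hidx3, Finset.sum_range_succ]
    rw [mulVec_sum]
    rw [add_comm]
    congr 1
    · -- the old terms, multiplied by Ψc (j+3)
      refine Finset.sum_congr rfl ?_
      intro i hi
      have hi' : i ≤ j := by
        have := Finset.mem_range.mp hi; omega
      rw [Matrix.mulVec_mulVec]
      have e1 : j + 2 - 2 - i = j - i := by omega
      have e2 : j + 2 + 1 - 2 - i = (j - i) + 1 := by omega
      have e3 : j + 2 + 1 - 1 = j + 2 := by omega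
      rw [e1, e2, Bprod_succ_left, e3]
      simp only [Matrix.mul_assoc]
    · -- the new term
      have e4 : j + 2 + 1 - 2 - (j + 1) = 0 := by omega
      rw [e4, Bprod_zero, Matrix.one_mul, Matrix.mulVec_mulVec]
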